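/- arXiv:1710.00494 — 4 statements merged into one kernel-verified Lean document; each statement's English description precedes it below -/
import Mathlib

section
/- Let f : P_n → P_N be a map between the cones of real symmetric positive definite matrices that is monotone (A ≤ B in the Loewner order implies f(A) ≤ f(B)) and subhomogeneous of degree r > 0 (f(tA) ≤ t^r · f(A) for all t ≥ 1 and A ∈ P_n). Then f is Lipschitz with constant r for the Thompson metric: d_T(f(A), f(B)) ≤ r · d_T(A, B) for all A, B ∈ P_n. -/
open Matrix BigOperators

noncomputable section

/-- Loewner order: `A ≤ B` iff `B - A` is positive semidefinite. -/
def loewnerLE {m : ℕ} (A B : Matrix (Fin m) (Fin m) ℝ) : Prop := (B - A).PosSemidef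

/-- `M(B/A) = inf {α > 0 : B ≤ α A}` (Loewner order). -/
noncomputable def Mratio {m : ℕ} (A B : Matrix (Fin m) (Fin m) ℝ) : ℝ :=
  sInf {α : ℝ | 0 < α ∧ loewnerLE B (α • A)}

/-- The Thompson metric `d_T(A,B) = max (log M(B/A)) (log M(A/B))`. -/
noncomputable def thompson {m : ℕ} (A B : Matrix (Fin m) (Fin m) ℝ) : ℝ :=
  max (Real.log (Mratio A B)) (Real.log (Mratio B A))

/-- Eigenvalues of a (Hermitian) matrix arranged in decreasing order, counting
multiplicities; junk value `0` if the matrix is not Hermitian. -/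
noncomputable def sortedEigs {m : ℕ} (A : Matrix (Fin m) (Fin m) ℝ) : Fin m → ℝ :=
  if hA : A.IsHermitian then fun i => hA.eigenvalues (Tuple.sort hA.eigenvalues i.rev)
  else fun _ => 0

/-- Functional calculus: apply `f : ℝ → ℝ` to a symmetric matrix via the spectral
decomposition; junk value `0` if the matrix is not Hermitian. -/
noncomputable def matFun {m : ℕ} (f : ℝ → ℝ) (A : Matrix (Fin m) (Fin m) ℝ) :
    Matrix (Fin m) (Fin m) ℝ :=
  if hA : A.IsHermitian then hA.cfc f else 0

/-- Matrix logarithm via the spectral decomposition. -/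
noncomputable def matLog {m : ℕ} (A : Matrix (Fin m) (Fin m) ℝ) : Matrix (Fin m) (Fin m) ℝ :=
  matFun Real.log A

/-- Matrix exponential via the spectral decomposition. -/
noncomputable def matExp {m : ℕ} (A : Matrix (Fin m) (Fin m) ℝ) : Matrix (Fin m) (Fin m) ℝ :=
  matFun Real.exp A

/-- Positive-definite square root. -/
noncomputable def pdSqrt {m : ℕ} (A : Matrix (Fin m) (Fin m) ℝ) : Matrix (Fin m) (Fin m) ℝ :=
  matFun Real.sqrt A

/-- The inverse square root `A^{-1/2}`. -/
noncomputable def pdInvSqrt {m : ℕ} (A : Matrix (Fin m) (Fin m) ℝ) : Matrix (Fin m) (Fin m) ℝ :=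
  matFun (fun x => (Real.sqrt x)⁻¹) A

/-- The real power `A^r` of a positive definite matrix via the spectral decomposition. -/
noncomputable def matPow {m : ℕ} (r : ℝ) (A : Matrix (Fin m) (Fin m) ℝ) :
    Matrix (Fin m) (Fin m) ℝ :=
  matFun (fun x => x ^ r) A

/-- Frobenius norm `(tr X²)^{1/2}` of a real symmetric matrix. -/
noncomputable def frob {m : ℕ} (X : Matrix (Fin m) (Fin m) ℝ) : ℝ :=
  Real.sqrt ((X * X).trace)

/-- Riemannian trace distance `δ(A,B) = ‖log (A^{-1/2} B A^{-1/2})‖_F`. -/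
noncomputable def riemDist {m : ℕ} (A B : Matrix (Fin m) (Fin m) ℝ) : ℝ :=
  frob (matLog (pdInvSqrt A * B * pdInvSqrt A))

/-- The standard symplectic form matrix `J = [[0, I], [-I, 0]]` of size `(n+n) × (n+n)`. -/
noncomputable def Jmat (n : ℕ) : Matrix (Fin (n + n)) (Fin (n + n)) ℝ :=
  Matrix.reindex finSumFinEquiv finSumFinEquiv (Matrix.fromBlocks 0 1 (-1) 0)

/-- The matrix `A^{1/2} Jᵀ A J A^{1/2}`, whose eigenvalues are the squares of the
(extended) symplectic eigenvalues of `A`. -/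
noncomputable def sympProd {n : ℕ} (A : Matrix (Fin (n + n)) (Fin (n + n)) ℝ) :
    Matrix (Fin (n + n)) (Fin (n + n)) ℝ :=
  pdSqrt A * (Jmat n)ᵀ * A * Jmat n * pdSqrt A

/-- The `t`-weighted geometric mean `A #_t B = A^{1/2} (A^{-1/2} B A^{-1/2})^t A^{1/2}`. -/
noncomputable def gmean {m : ℕ} (t : ℝ) (A B : Matrix (Fin m) (Fin m) ℝ) :
    Matrix (Fin m) (Fin m) ℝ :=
  pdSqrt A * matPow t (pdInvSqrt A * B * pdInvSqrt A) * pdSqrt A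

/-!
Write `t = exp (d_T(A, B))`; then `t ≥ 1`, since comparing traces shows that `M(B/A)` or `M(A/B)`
is at least `1`, and `B ≤ α A`, `A ≤ α B` for every `α > t`. Monotonicity and
subhomogeneity give `f B ≤ f (α A) ≤ α ^ r f A`, and symmetrically, whence both ratios
`M(f B / f A)` and `M(f A / f B)` are at most `t ^ r = exp (r d_T(A, B))`. The infimum defining
`M` need not be attained a priori, hence the passage through all `α > t`.
-/

open Real
open scoped MatrixOrder

theorem loewnerLE_iff_le {m : ℕ} {A B : Matrix (Fin m) (Fin m) ℝ} : loewnerLE A B ↔ A ≤ B :=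
  Iff.rfl

theorem Matrix.PosDef.exists_le_smul {n : Type*} [Fintype n] [DecidableEq n]
    {A B : Matrix n n ℝ} (hA : A.PosDef) (hB : B.IsHermitian) : ∃ α : ℝ, 0 < α ∧ B ≤ α • A := by
  cases isEmpty_or_nonempty n
  · exact ⟨1, one_pos, (Subsingleton.elim _ _).le⟩
  obtain ⟨r, hr, hrA⟩ := (CFC.exists_pos_algebraMap_le_iff hA.isHermitian.isSelfAdjoint).2
    fun _ hx ↦ (isStrictlyPositive_iff_posDef.2 hA).spectrum_pos hx
  obtain ⟨s, hs⟩ := (ContinuousFunctionalCalculus.isCompact_spectrum (R := ℝ) B).bddAbove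
  have hBs : B ≤ algebraMap ℝ _ (max s 1) :=
    (le_algebraMap_iff_spectrum_le hB.isSelfAdjoint).2 fun _ hx ↦ (hs hx).trans (le_max_left _ _)
  refine ⟨max s 1 / r, by positivity, hBs.trans ?_⟩
  calc algebraMap ℝ _ (max s 1) = (max s 1 / r) • algebraMap ℝ (Matrix n n ℝ) r := by
        simp only [Algebra.algebraMap_eq_smul_one, smul_smul, div_mul_cancel₀ _ hr.ne']
    _ ≤ (max s 1 / r) • A := smul_le_smul_of_nonneg_left hrA (by positivity)

section Mratio

variable {m : ℕ} {A B : Matrix (Fin m) (Fin m) ℝ}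

theorem Mratio_eq_sInf : Mratio A B = sInf {α : ℝ | 0 < α ∧ B ≤ α • A} :=
  rfl

theorem Mratio_nonneg : 0 ≤ Mratio A B :=
  Real.sInf_nonneg fun _ h ↦ h.1.le

theorem Mratio_le_of_le_smul {α : ℝ} (hα : 0 < α) (h : B ≤ α • A) : Mratio A B ≤ α :=
  csInf_le ⟨0, fun _ h ↦ h.1.le⟩ ⟨hα, h⟩

theorem le_smul_of_Mratio_lt (hA : A.PosDef) (hB : B.IsHermitian) {α : ℝ}
    (h : Mratio A B < α) : B ≤ α • A := by
  rw [Mratio_eq_sInf] at h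
  obtain ⟨β, ⟨-, hβ⟩, hβα⟩ := exists_lt_of_csInf_lt (hA.exists_le_smul hB) h
  calc B ≤ β • A := hβ
    _ ≤ α • A := by
      rw [← sub_nonneg, ← sub_smul]
      exact smul_nonneg (sub_nonneg.2 hβα.le) (nonneg_iff_posSemidef.2 hA.posSemidef)

theorem Mratio_le_iff (hA : A.PosDef) (hB : B.IsHermitian) {s : ℝ} (hs : 0 ≤ s) :
    Mratio A B ≤ s ↔ ∀ α, s < α → B ≤ α • A :=
  ⟨fun h _ hα ↦ le_smul_of_Mratio_lt hA hB (h.trans_lt hα),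
    fun h ↦ le_of_forall_gt_imp_ge_of_dense fun α hα ↦
      Mratio_le_of_le_smul (hs.trans_lt hα) (h α hα)⟩

theorem one_le_Mratio_of_trace_le [NeZero m] (hA : A.PosDef) (hB : B.IsHermitian)
    (h : A.trace ≤ B.trace) : 1 ≤ Mratio A B := by
  rw [Mratio_eq_sInf]
  refine le_csInf (hA.exists_le_smul hB) fun α ⟨_, hα⟩ ↦ ?_
  have htr : B.trace ≤ α * A.trace := by
    simpa [trace_sub, trace_smul, sub_nonneg] using (le_iff.1 hα).trace_nonneg
  nlinarith [hA.trace_pos]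

theorem Mratio_eq_zero_of_dim_zero (A B : Matrix (Fin 0) (Fin 0) ℝ) : Mratio A B = 0 := by
  have hS : {α : ℝ | 0 < α ∧ B ≤ α • A} = Set.Ioi 0 := by
    ext α
    simp [Subsingleton.elim B (α • A)]
  rw [Mratio_eq_sInf, hS, csInf_Ioi]

end Mratio

section Thompson

variable {m : ℕ} {A B : Matrix (Fin m) (Fin m) ℝ}

theorem thompson_comm (A B : Matrix (Fin m) (Fin m) ℝ) : thompson A B = thompson B A :=
  max_comm _ _

theorem thompson_nonneg (hA : A.PosDef) (hB : B.PosDef) : 0 ≤ thompson A B := by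
  rcases m.eq_zero_or_pos with rfl | hm
  · simp [thompson, Mratio_eq_zero_of_dim_zero]
  have : NeZero m := ⟨hm.ne'⟩
  rcases le_total A.trace B.trace with h | h
  · exact le_max_of_le_left (log_nonneg (one_le_Mratio_of_trace_le hA hB.isHermitian h))
  · exact le_max_of_le_right (log_nonneg (one_le_Mratio_of_trace_le hB hA.isHermitian h))

theorem Mratio_le_exp_thompson (A B : Matrix (Fin m) (Fin m) ℝ) :
    Mratio A B ≤ exp (thompson A B) :=
  (le_exp_log _).trans (exp_le_exp.2 (le_max_left _ _))

theorem log_Mratio_le_of_le_exp {c : ℝ} (hc : 0 ≤ c) (h : Mratio A B ≤ exp c) :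
    log (Mratio A B) ≤ c := by
  rcases (Mratio_nonneg : 0 ≤ Mratio A B).eq_or_lt with h0 | hpos
  · simpa [← h0] using hc
  · exact (log_le_iff_le_exp hpos).2 h

end Thompson

theorem Mratio_map_le_rpow {n N : ℕ} {r : ℝ} (hr : 0 < r)
    {f : {A : Matrix (Fin n) (Fin n) ℝ // A.PosDef} → {B : Matrix (Fin N) (Fin N) ℝ // B.PosDef}}
    (hmono : ∀ A B, A.1 ≤ B.1 → (f A).1 ≤ (f B).1)
    (hsub : ∀ t : ℝ, 1 ≤ t → ∀ A (h : (t • A.1).PosDef), (f ⟨t • A.1, h⟩).1 ≤ t ^ r • (f A).1)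
    {X Y : {A : Matrix (Fin n) (Fin n) ℝ // A.PosDef}} {s : ℝ} (hs : 1 ≤ s)
    (h : Mratio X.1 Y.1 ≤ s) : Mratio (f X).1 (f Y).1 ≤ s ^ r := by
  have hs0 : 0 ≤ s := zero_le_one.trans hs
  rw [Mratio_le_iff (f X).2 (f Y).2.isHermitian (rpow_nonneg hs0 r)]
  intro c hc
  have hc0 : 0 ≤ c := (rpow_nonneg hs0 r).trans hc.le
  have hsα : s < c ^ r⁻¹ := (lt_rpow_inv_iff_of_pos hs0 hc0 hr).2 hc
  have hαX : (c ^ r⁻¹ • X.1).PosDef := X.2.smul (zero_lt_one.trans_le (hs.trans hsα.le))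
  have hYX : Y.1 ≤ c ^ r⁻¹ • X.1 :=
    (Mratio_le_iff X.2 Y.2.isHermitian hs0).1 h _ hsα
  have hfY := (hmono Y ⟨_, hαX⟩ hYX).trans (hsub _ (hs.trans hsα.le) X hαX)
  rwa [rpow_inv_rpow hc0 hr.ne'] at hfY

/-- a monotone, degree-`r` subhomogeneous map `f : P_n → P_N` is
`r`-Lipschitz for the Thompson metric. -/
theorem thompson_lipschitz_of_monotone_subhom
    (n N : ℕ) (r : ℝ) (hr : 0 < r)
    (f : {A : Matrix (Fin n) (Fin n) ℝ // A.PosDef} →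
         {B : Matrix (Fin N) (Fin N) ℝ // B.PosDef})
    (hmono : ∀ A B, loewnerLE A.1 B.1 → loewnerLE (f A).1 (f B).1)
    (hsub : ∀ (t : ℝ), 1 ≤ t → ∀ (A) (h : (t • A.1).PosDef),
      loewnerLE (f ⟨t • A.1, h⟩).1 (t ^ r • (f A).1)) :
    ∀ A B, thompson (f A).1 (f B).1 ≤ r * thompson A.1 B.1 := by
  simp only [loewnerLE_iff_le] at hmono hsub
  intro A B
  have hθ : 0 ≤ thompson A.1 B.1 := thompson_nonneg A.2 B.2
  have hrθ : 0 ≤ r * thompson A.1 B.1 := mul_nonneg hr.le hθ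
  have ht : 1 ≤ exp (thompson A.1 B.1) := one_le_exp hθ
  have hAB := Mratio_map_le_rpow hr hmono hsub ht (Mratio_le_exp_thompson A.1 B.1)
  have hBA := Mratio_map_le_rpow hr hmono hsub ht
    (thompson_comm A.1 B.1 ▸ Mratio_le_exp_thompson B.1 A.1)
  rw [← exp_mul, mul_comm] at hAB hBA
  exact max_le (log_Mratio_le_of_le_exp hrθ hAB) (log_Mratio_le_of_le_exp hrθ hBA)
end
end

section
/- The eigenvalue map is contractive for the Riemannian trace distance: for all A, B ∈ P_n, (∑_{i=1}^n (log λ_i(A) − log λ_i(B))²)^{1/2} ≤ ‖log(A^{−1/2} B A^{−1/2})‖_F, where λ_1 ≥ ⋯ ≥ λ_n are the eigenvalues in decreasing order. -/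
open Matrix BigOperators

noncomputable section

/-!
Write `M = A^{-1/2} B A^{-1/2}`, so that `B = A^{1/2} M A^{1/2}` and `δ(A,B)² = ∑ⱼ (log λⱼ(M))²`.
The vector `vᵢ = log λᵢ(B) - log λᵢ(A)` is majorized by `wⱼ = log λⱼ(M)`. The totals agree
because the determinant is multiplicative. For an index set `S` with `k + 1` elements, raise every
eigenvalue of `M` below `c = λₖ(M)` to `c`; the resulting `B' = A^{1/2} M' A^{1/2}` dominates both
`B` and `c A` in the Loewner order, so by Weyl's monotonicity theorem `∑_{i ∈ S} vᵢ` is at most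
`log det B' - log det A - (n - k - 1) log c = ∑_{j ≤ k} wⱼ`. Finally, majorization implies
`∑ vᵢ² ≤ ∑ wⱼ²`, by Abel summation and Cauchy–Schwarz.
-/

open Finset

section MatFun
variable {m : ℕ} {A : Matrix (Fin m) (Fin m) ℝ}

theorem matFun_eq_of_isHermitian (hA : A.IsHermitian) (f : ℝ → ℝ) :
    matFun f A = (hA.eigenvectorUnitary : Matrix (Fin m) (Fin m) ℝ) *
      diagonal (f ∘ hA.eigenvalues) * star (hA.eigenvectorUnitary : Matrix (Fin m) (Fin m) ℝ) := by
  rw [matFun, dif_pos hA]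
  simp [IsHermitian.cfc, Unitary.conjStarAlgAut_apply, Function.comp_def]

theorem isHermitian_matFun (hA : A.IsHermitian) (f : ℝ → ℝ) : (matFun f A).IsHermitian := by
  rw [matFun_eq_of_isHermitian hA]
  exact isHermitian_mul_mul_conjTranspose _ (isHermitian_diagonal _)

theorem matFun_mul_matFun (hA : A.IsHermitian) (f g : ℝ → ℝ) :
    matFun f A * matFun g A = matFun (fun x => f x * g x) A := by
  simp only [matFun_eq_of_isHermitian hA, Matrix.mul_assoc, ← Matrix.mul_assoc (star _),
    Unitary.coe_star_mul_self, Matrix.one_mul, ← Matrix.mul_assoc (diagonal _),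
    diagonal_mul_diagonal]
  rfl

theorem matFun_congr (hA : A.IsHermitian) {f g : ℝ → ℝ}
    (h : ∀ i, f (hA.eigenvalues i) = g (hA.eigenvalues i)) : matFun f A = matFun g A := by
  simp only [matFun_eq_of_isHermitian hA, Function.comp_def, h]

theorem matFun_id (hA : A.IsHermitian) : matFun id A = A := by
  rw [matFun_eq_of_isHermitian hA]
  conv_rhs => rw [hA.spectral_theorem]
  simp [Unitary.conjStarAlgAut_apply]

theorem matFun_const (hA : A.IsHermitian) (c : ℝ) : matFun (fun _ => c) A = c • 1 := by
  rw [matFun_eq_of_isHermitian hA, show (fun _ => c) ∘ hA.eigenvalues = fun _ => c from rfl,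
    ← smul_one_eq_diagonal, Matrix.mul_smul, Matrix.mul_one, Matrix.smul_mul,
    Unitary.mul_star_self_of_mem hA.eigenvectorUnitary.2]

theorem trace_matFun (hA : A.IsHermitian) (f : ℝ → ℝ) :
    (matFun f A).trace = ∑ i, f (hA.eigenvalues i) := by
  rw [matFun_eq_of_isHermitian hA, trace_mul_cycle, Unitary.coe_star_mul_self, Matrix.one_mul,
    trace_diagonal]
  rfl

theorem det_matFun (hA : A.IsHermitian) (f : ℝ → ℝ) :
    (matFun f A).det = ∏ i, f (hA.eigenvalues i) := by
  rw [matFun_eq_of_isHermitian hA, det_mul_comm, ← Matrix.mul_assoc, Unitary.coe_star_mul_self,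
    Matrix.one_mul, det_diagonal]
  rfl

theorem posSemidef_matFun_sub_matFun (hA : A.IsHermitian) {f g : ℝ → ℝ}
    (h : ∀ i, g (hA.eigenvalues i) ≤ f (hA.eigenvalues i)) :
    (matFun f A - matFun g A).PosSemidef := by
  rw [matFun_eq_of_isHermitian hA, matFun_eq_of_isHermitian hA, ← Matrix.sub_mul,
    ← Matrix.mul_sub, diagonal_sub, star_eq_conjTranspose]
  exact (PosSemidef.diagonal fun i => sub_nonneg.mpr (h i)).mul_mul_conjTranspose_same _

end MatFun

section SquareRoot
variable {m : ℕ} {A : Matrix (Fin m) (Fin m) ℝ}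

theorem pdSqrt_mul_pdSqrt (hA : A.PosSemidef) : pdSqrt A * pdSqrt A = A := by
  rw [pdSqrt, matFun_mul_matFun hA.1, matFun_congr hA.1 (g := id)
    fun i => Real.mul_self_sqrt (hA.eigenvalues_nonneg i), matFun_id hA.1]

theorem pdInvSqrt_mul_pdSqrt (hA : A.PosDef) : pdInvSqrt A * pdSqrt A = 1 := by
  rw [pdSqrt, pdInvSqrt, matFun_mul_matFun hA.1, matFun_congr hA.1 (g := fun _ => 1)
    fun i => inv_mul_cancel₀ (Real.sqrt_pos.mpr (hA.eigenvalues_pos i)).ne',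
    matFun_const hA.1, one_smul]

theorem pdSqrt_mul_pdInvSqrt (hA : A.PosDef) : pdSqrt A * pdInvSqrt A = 1 := by
  rw [pdSqrt, pdInvSqrt, matFun_mul_matFun hA.1, matFun_congr hA.1 (g := fun _ => 1)
    fun i => mul_inv_cancel₀ (Real.sqrt_pos.mpr (hA.eigenvalues_pos i)).ne',
    matFun_const hA.1, one_smul]

theorem posDef_pdInvSqrt_mul_mul_pdInvSqrt {B : Matrix (Fin m) (Fin m) ℝ} (hA : A.PosDef)
    (hB : B.PosDef) : (pdInvSqrt A * B * pdInvSqrt A).PosDef := by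
  have hinj : Function.Injective (pdInvSqrt A).mulVec := fun x y h => by
    have := congrArg (pdSqrt A *ᵥ ·) h
    simpa only [mulVec_mulVec, pdSqrt_mul_pdInvSqrt hA, one_mulVec] using this
  have hS : (pdInvSqrt A)ᴴ = pdInvSqrt A := isHermitian_matFun hA.1 _
  simpa only [hS] using hB.conjTranspose_mul_mul_same hinj

end SquareRoot

section SortedEigs
variable {m : ℕ} {A : Matrix (Fin m) (Fin m) ℝ}

theorem sortedEigs_eq_comp (hA : A.IsHermitian) :
    sortedEigs A = hA.eigenvalues ∘ (Fin.revPerm.trans (Tuple.sort hA.eigenvalues)) := by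
  rw [sortedEigs, dif_pos hA]
  rfl

theorem sortedEigs_antitone (hA : A.IsHermitian) : Antitone (sortedEigs A) := by
  rw [sortedEigs_eq_comp hA]
  exact fun i j hij => Tuple.monotone_sort _ (Fin.rev_le_rev.mpr hij)

theorem sum_comp_sortedEigs (hA : A.IsHermitian) (f : ℝ → ℝ) :
    ∑ i, f (sortedEigs A i) = ∑ i, f (hA.eigenvalues i) := by
  rw [sortedEigs_eq_comp hA]
  exact Equiv.sum_comp _ (f ∘ hA.eigenvalues)

theorem prod_comp_sortedEigs (hA : A.IsHermitian) (f : ℝ → ℝ) :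
    ∏ i, f (sortedEigs A i) = ∏ i, f (hA.eigenvalues i) := by
  rw [sortedEigs_eq_comp hA]
  exact Equiv.prod_comp _ (f ∘ hA.eigenvalues)

theorem sortedEigs_pos (hA : A.PosDef) (i : Fin m) : 0 < sortedEigs A i := by
  rw [sortedEigs_eq_comp hA.1]
  exact hA.eigenvalues_pos _

theorem sum_log_sortedEigs (hA : A.PosDef) : ∑ i, Real.log (sortedEigs A i) = Real.log A.det := by
  rw [sum_comp_sortedEigs hA.1, hA.1.det_eq_prod_eigenvalues,
    ← Real.log_prod fun i _ => (hA.eigenvalues_pos i).ne']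
  simp

theorem succ_le_card_filter_sortedEigs_le (hA : A.IsHermitian) (j : Fin m) :
    j.val + 1 ≤ #{i | sortedEigs A j ≤ hA.eigenvalues i} := by
  rw [← Fin.card_Iic, ← card_image_of_injective _
    (Fin.revPerm.trans (Tuple.sort hA.eigenvalues)).injective]
  refine card_le_card fun i hi => ?_
  obtain ⟨k, hk, rfl⟩ := mem_image.mp hi
  simpa [sortedEigs_eq_comp hA] using sortedEigs_antitone hA (mem_Iic.mp hk)

theorem sub_le_card_filter_le_sortedEigs (hA : A.IsHermitian) (j : Fin m) :
    m - j.val ≤ #{i | hA.eigenvalues i ≤ sortedEigs A j} := by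
  rw [← Fin.card_Ici, ← card_image_of_injective _
    (Fin.revPerm.trans (Tuple.sort hA.eigenvalues)).injective]
  refine card_le_card fun i hi => ?_
  obtain ⟨k, hk, rfl⟩ := mem_image.mp hi
  simpa [sortedEigs_eq_comp hA] using sortedEigs_antitone hA (mem_Ici.mp hk)

theorem frob_matFun (hA : A.IsHermitian) (f : ℝ → ℝ) :
    frob (matFun f A) = √(∑ i, f (sortedEigs A i) ^ 2) := by
  rw [frob, matFun_mul_matFun hA, trace_matFun hA, sum_comp_sortedEigs hA (fun x => f x ^ 2)]
  simp only [sq]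

end SortedEigs

namespace OrthonormalBasis
variable {ι E : Type*} [Fintype ι] [NormedAddCommGroup E] [InnerProductSpace ℝ E]
  (b : OrthonormalBasis ι ℝ E)

theorem repr_eq_zero_of_mem_span_image {s : Set ι} {x : E}
    (hx : x ∈ Submodule.span ℝ (b '' s)) {i : ι} (hi : i ∉ s) : b.repr x i = 0 := by
  rw [← b.coe_toBasis, b.toBasis.mem_span_image] at hx
  rw [← b.coe_toBasis_repr_apply]
  exact Finsupp.notMem_support_iff.mp fun h => hi (hx h)

theorem finrank_span_image (s : Finset ι) :
    Module.finrank ℝ (Submodule.span ℝ (b '' s)) = #s := by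
  have := finrank_span_eq_card
    (b.orthonormal.linearIndependent.comp ((↑) : s → ι) Subtype.val_injective)
  rw [Fintype.card_coe] at this
  have hrange : Set.range (b ∘ ((↑) : s → ι)) = b '' s := by ext; simp
  rwa [hrange] at this

theorem norm_sq_eq_sum_repr_sq (x : E) : ‖x‖ ^ 2 = ∑ i, b.repr x i ^ 2 := by
  rw [← b.repr.norm_map, EuclideanSpace.norm_sq_eq]
  simp

end OrthonormalBasis

namespace Matrix.IsHermitian
variable {n : Type*} [Fintype n] [DecidableEq n] {A : Matrix n n ℝ} (hA : A.IsHermitian)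

theorem dotProduct_mulVec_eq_sum (x : EuclideanSpace ℝ n) :
    x.ofLp ⬝ᵥ (A *ᵥ x.ofLp) = ∑ i, hA.eigenvalues i * hA.eigenvectorBasis.repr x i ^ 2 := by
  set b := hA.eigenvectorBasis
  have hb : ∀ i, toEuclideanLin A (b i) = hA.eigenvalues i • b i := fun i => by
    rw [toLpLin_apply, hA.mulVec_eigenvectorBasis]; rfl
  calc x.ofLp ⬝ᵥ (A *ᵥ x.ofLp) = inner ℝ (toEuclideanLin A x) x := by
        rw [EuclideanSpace.inner_eq_star_dotProduct, toLpLin_apply]; simp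
    _ = ∑ i, inner ℝ (toEuclideanLin A x) (b i) * inner ℝ (b i) x :=
        (b.sum_inner_mul_inner _ _).symm
    _ = _ := by
        refine sum_congr rfl fun i _ => ?_
        rw [isSymmetric_toEuclideanLin_iff.mpr hA, hb, real_inner_smul_right,
          real_inner_comm, b.repr_apply_apply]
        ring

theorem mul_norm_sq_le_dotProduct_mulVec {α : ℝ} {x : EuclideanSpace ℝ n}
    (hx : x ∈ Submodule.span ℝ (hA.eigenvectorBasis '' {i | α ≤ hA.eigenvalues i})) :
    α * ‖x‖ ^ 2 ≤ x.ofLp ⬝ᵥ (A *ᵥ x.ofLp) := by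
  rw [hA.dotProduct_mulVec_eq_sum, hA.eigenvectorBasis.norm_sq_eq_sum_repr_sq, mul_sum]
  refine sum_le_sum fun i _ => ?_
  by_cases hi : α ≤ hA.eigenvalues i
  · exact mul_le_mul_of_nonneg_right hi (sq_nonneg _)
  · simp [hA.eigenvectorBasis.repr_eq_zero_of_mem_span_image hx hi]

theorem dotProduct_mulVec_le_mul_norm_sq {β : ℝ} {x : EuclideanSpace ℝ n}
    (hx : x ∈ Submodule.span ℝ (hA.eigenvectorBasis '' {i | hA.eigenvalues i ≤ β})) :
    x.ofLp ⬝ᵥ (A *ᵥ x.ofLp) ≤ β * ‖x‖ ^ 2 := by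
  rw [hA.dotProduct_mulVec_eq_sum, hA.eigenvectorBasis.norm_sq_eq_sum_repr_sq, mul_sum]
  refine sum_le_sum fun i _ => ?_
  by_cases hi : hA.eigenvalues i ≤ β
  · exact mul_le_mul_of_nonneg_right hi (sq_nonneg _)
  · simp [hA.eigenvectorBasis.repr_eq_zero_of_mem_span_image hx hi]

end Matrix.IsHermitian

/-- Weyl's monotonicity theorem, proved by intersecting the span of the eigenvectors of `A` for
its `j + 1` largest eigenvalues with the span of those of `B` for its `m - j` smallest ones. -/
theorem smul_sortedEigs_le_sortedEigs {m : ℕ} {A B : Matrix (Fin m) (Fin m) ℝ}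
    (hA : A.IsHermitian) (hB : B.IsHermitian) {c : ℝ} (hc : 0 ≤ c)
    (hAB : (B - c • A).PosSemidef) (j : Fin m) :
    c * sortedEigs A j ≤ sortedEigs B j := by
  set V := Submodule.span ℝ
    (hA.eigenvectorBasis '' ({i | sortedEigs A j ≤ hA.eigenvalues i} : Finset _))
  set W := Submodule.span ℝ
    (hB.eigenvectorBasis '' ({i | hB.eigenvalues i ≤ sortedEigs B j} : Finset _))
  have hVW : ¬ Disjoint V W := fun h => by
    have := Submodule.finrank_add_finrank_le_of_disjoint h
    rw [hA.eigenvectorBasis.finrank_span_image, hB.eigenvectorBasis.finrank_span_image,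
      finrank_euclideanSpace_fin] at this
    have := succ_le_card_filter_sortedEigs_le hA j
    have := sub_le_card_filter_le_sortedEigs hB j
    omega
  obtain ⟨x, hxV, hxW, hx⟩ : ∃ x ∈ V, x ∈ W ∧ x ≠ 0 := by
    simpa [Submodule.disjoint_def] using hVW
  have hAx := hA.mul_norm_sq_le_dotProduct_mulVec (by simpa [V] using hxV)
  have hBx := hB.dotProduct_mulVec_le_mul_norm_sq (by simpa [W] using hxW)
  have hABx : c * (x.ofLp ⬝ᵥ (A *ᵥ x.ofLp)) ≤ x.ofLp ⬝ᵥ (B *ᵥ x.ofLp) := by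
    have := hAB.dotProduct_mulVec_nonneg x.ofLp
    simp only [star_trivial, sub_mulVec, smul_mulVec, dotProduct_sub, dotProduct_smul,
      smul_eq_mul] at this
    linarith
  refine le_of_mul_le_mul_right ?_ (by positivity : 0 < ‖x‖ ^ 2)
  calc c * sortedEigs A j * ‖x‖ ^ 2 ≤ c * (x.ofLp ⬝ᵥ (A *ᵥ x.ofLp)) := by
        rw [mul_assoc]; exact mul_le_mul_of_nonneg_left hAx hc
    _ ≤ sortedEigs B j * ‖x‖ ^ 2 := hABx.trans hBx

section Majorization
variable {m : ℕ}

theorem Antitone.mul_sum_Iic_le_sum_Iic_mul {u d : Fin m → ℝ} (hu : Antitone u)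
    (hd : ∀ k, 0 ≤ ∑ i ≤ k, d i) (k : Fin m) :
    u k * ∑ i ≤ k, d i ≤ ∑ i ≤ k, u i * d i := by
  obtain ⟨n, rfl⟩ : ∃ n, m = n + 1 := Nat.exists_eq_succ_of_ne_zero k.pos.ne'
  induction k using Fin.induction with
  | zero =>
    have hIic : Iic (0 : Fin (n + 1)) = {0} := by ext j; simp
    simp [hIic]
  | succ k ih =>
    have hIic : Iic k.succ = insert k.succ (Iic k.castSucc) := by
      ext j
      simp only [mem_Iic, mem_insert, Fin.le_def, Fin.ext_iff, Fin.val_succ, Fin.val_castSucc]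
      omega
    have hmono : u k.succ * ∑ i ≤ k.castSucc, d i ≤ u k.castSucc * ∑ i ≤ k.castSucc, d i :=
      mul_le_mul_of_nonneg_right (hu (Fin.castSucc_le_succ k)) (hd _)
    rw [hIic, sum_insert (by simp), sum_insert (by simp)]
    linarith

theorem Antitone.sum_sq_le_sum_sq_of_sum_Iic_le {u w : Fin m → ℝ} (hu : Antitone u)
    (hpre : ∀ k, ∑ i ≤ k, u i ≤ ∑ i ≤ k, w i) (htot : ∑ i, u i = ∑ i, w i) :
    ∑ i, u i ^ 2 ≤ ∑ i, w i ^ 2 := by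
  cases m with
  | zero => simp
  | succ n =>
    have habel := hu.mul_sum_Iic_le_sum_Iic_mul (d := w - u)
      (fun k => by simpa [sum_sub_distrib] using hpre k) (Fin.last n)
    have hIic : Iic (Fin.last n) = univ := by ext; simp [Fin.le_last]
    simp only [hIic, Pi.sub_apply, sum_sub_distrib, htot, sub_self, mul_zero, mul_sub] at habel
    have hcs := sum_mul_sq_le_sq_mul_sq univ u w
    have hu2 : 0 ≤ ∑ i, u i ^ 2 := sum_nonneg fun i _ => sq_nonneg _
    have hw2 : 0 ≤ ∑ i, w i ^ 2 := sum_nonneg fun i _ => sq_nonneg _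
    simp only [sq] at *
    nlinarith

theorem sum_sq_le_sum_sq_of_sum_le_sum_Iic {v w : Fin m → ℝ}
    (hmaj : ∀ (k : Fin m) (S : Finset (Fin m)), #S = k + 1 → ∑ i ∈ S, v i ≤ ∑ i ≤ k, w i)
    (htot : ∑ i, v i = ∑ i, w i) :
    ∑ i, v i ^ 2 ≤ ∑ i, w i ^ 2 := by
  set e := Fin.revPerm.trans (Tuple.sort v)
  have hu : Antitone (v ∘ e) := fun i j hij => Tuple.monotone_sort v (Fin.rev_le_rev.mpr hij)
  have hpre (k : Fin m) : ∑ i ≤ k, (v ∘ e) i ≤ ∑ i ≤ k, w i := by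
    simpa only [sum_map, Function.comp_apply, Equiv.coe_toEmbedding] using
      hmaj k ((Iic k).map e.toEmbedding) (by simp)
  rw [← e.sum_comp (fun i => v i ^ 2)]
  exact hu.sum_sq_le_sum_sq_of_sum_Iic_le hpre (by rw [← htot]; exact e.sum_comp v)

end Majorization

theorem sum_sub_max_of_antitone {m : ℕ} {f : Fin m → ℝ} (hf : Antitone f) (g : ℝ → ℝ)
    (k : Fin m) :
    ∑ i, (g (max (f i) (f k)) - g (f k)) = ∑ i ≤ k, (g (f i) - g (f k)) := by
  rw [← sum_subset (subset_univ (Iic k)) fun i _ hi => by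
    rw [max_eq_right (hf (le_of_lt (not_le.mp (by simpa using hi)))), sub_self]]
  exact sum_congr rfl fun i hi => by rw [max_eq_left (hf (mem_Iic.mp hi))]

section LogMajorization
variable {m : ℕ} {A B M R : Matrix (Fin m) (Fin m) ℝ}

theorem det_conjTranspose_mul_mul (R X : Matrix (Fin m) (Fin m) ℝ) :
    (Rᴴ * X * R).det = (Rᴴ * R).det * X.det := by
  rw [det_mul, det_mul, det_mul]; ring

theorem sum_log_sortedEigs_sub_eq (hA : A.PosDef) (hB : B.PosDef) (hM : M.PosDef)
    (hRA : Rᴴ * R = A) (hRB : Rᴴ * M * R = B) :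
    ∑ i, (Real.log (sortedEigs B i) - Real.log (sortedEigs A i))
      = ∑ i, Real.log (sortedEigs M i) := by
  rw [sum_sub_distrib, sum_log_sortedEigs hA, sum_log_sortedEigs hB, sum_log_sortedEigs hM,
    ← hRB, det_conjTranspose_mul_mul, hRA, Real.log_mul hA.det_pos.ne' hM.det_pos.ne']
  ring

theorem exists_majorant_det_eq_prod_max (hB : B.PosDef) (hM : M.IsHermitian)
    (hRA : Rᴴ * R = A) (hRB : Rᴴ * M * R = B) (c : ℝ) :
    ∃ B', B'.PosDef ∧ (B' - B).PosSemidef ∧ (B' - c • A).PosSemidef ∧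
      B'.det = A.det * ∏ i, max (sortedEigs M i) c := by
  set M' := matFun (fun x => max x c) M
  have hM'M : (M' - M).PosSemidef := by
    simpa only [matFun_id hM] using posSemidef_matFun_sub_matFun hM (f := fun x => max x c)
      (g := id) fun i => le_max_left _ c
  have hM'c : (M' - c • 1).PosSemidef := by
    simpa only [matFun_const hM] using posSemidef_matFun_sub_matFun hM (f := fun x => max x c)
      (g := fun _ => c) fun i => le_max_right _ c
  have hB'B : (Rᴴ * M' * R - B).PosSemidef := by
    simpa [← hRB, Matrix.mul_sub, Matrix.sub_mul] using hM'M.conjTranspose_mul_mul_same R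
  refine ⟨Rᴴ * M' * R, by simpa using hB.add_posSemidef hB'B, hB'B, ?_, ?_⟩
  · simpa [← hRA, Matrix.mul_sub, Matrix.sub_mul] using hM'c.conjTranspose_mul_mul_same R
  · rw [det_conjTranspose_mul_mul, hRA, det_matFun hM, prod_comp_sortedEigs hM (fun x => max x c)]

theorem sum_log_sortedEigs_sub_le (hA : A.PosDef) (hB : B.PosDef) (hM : M.PosDef)
    (hRA : Rᴴ * R = A) (hRB : Rᴴ * M * R = B) (k : Fin m) (S : Finset (Fin m))
    (hS : #S = k + 1) :
    ∑ i ∈ S, (Real.log (sortedEigs B i) - Real.log (sortedEigs A i))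
      ≤ ∑ j ≤ k, Real.log (sortedEigs M j) := by
  set c := sortedEigs M k
  have hc : 0 < c := sortedEigs_pos hM k
  obtain ⟨B', hB', hB'B, hB'A, hdetB'⟩ := exists_majorant_det_eq_prod_max hB hM.1 hRA hRB c
  have hle (i : Fin m) : Real.log (sortedEigs B i) ≤ Real.log (sortedEigs B' i) :=
    Real.log_le_log (sortedEigs_pos hB i)
      (by simpa using smul_sortedEigs_le_sortedEigs hB.1 hB'.1 zero_le_one (by simpa using hB'B) i)
  have hnonneg (i : Fin m) :
      0 ≤ Real.log (sortedEigs B' i) - Real.log (sortedEigs A i) - Real.log c := by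
    have := Real.log_le_log (mul_pos hc (sortedEigs_pos hA i))
      (smul_sortedEigs_le_sortedEigs hA.1 hB'.1 hc.le hB'A i)
    rw [Real.log_mul hc.ne' (sortedEigs_pos hA i).ne'] at this
    linarith
  have hsum : ∑ i, (Real.log (sortedEigs B' i) - Real.log (sortedEigs A i) - Real.log c)
      = ∑ i ≤ k, (Real.log (sortedEigs M i) - Real.log c) := by
    have hmax (i : Fin m) : 0 < max (sortedEigs M i) c := lt_max_of_lt_right hc
    rw [← sum_sub_max_of_antitone (sortedEigs_antitone hM.1) Real.log k, sum_sub_distrib,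
      sum_sub_distrib, sum_sub_distrib, sum_log_sortedEigs hB', sum_log_sortedEigs hA, hdetB',
      Real.log_mul hA.det_pos.ne' (prod_pos fun i _ => hmax i).ne',
      Real.log_prod fun i _ => (hmax i).ne']
    ring
  calc ∑ i ∈ S, (Real.log (sortedEigs B i) - Real.log (sortedEigs A i))
      ≤ ∑ i ∈ S, (Real.log (sortedEigs B' i) - Real.log (sortedEigs A i) - Real.log c)
          + #S * Real.log c := by
        rw [sum_sub_distrib (g := fun _ => Real.log c), sum_const, nsmul_eq_mul, sub_add_cancel]
        exact sum_le_sum fun i _ => by linarith [hle i]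
    _ ≤ ∑ i, (Real.log (sortedEigs B' i) - Real.log (sortedEigs A i) - Real.log c)
          + #S * Real.log c := by
        gcongr ?_ + _
        exact sum_le_sum_of_subset_of_nonneg (subset_univ S) fun i _ _ => hnonneg i
    _ = ∑ j ≤ k, Real.log (sortedEigs M j) := by
        rw [hsum, sum_sub_distrib, sum_const, nsmul_eq_mul, Fin.card_Iic, hS]
        ring

end LogMajorization

/-- the eigenvalue map is contractive for the Riemannian trace distance:
`(∑ i (log λ_i(A) − log λ_i(B))²)^{1/2} ≤ ‖log (A^{-1/2} B A^{-1/2})‖_F`. -/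
theorem eigenvalue_map_riemannian_contractive
    (n : ℕ) (A B : Matrix (Fin n) (Fin n) ℝ)
    (hA : A.PosDef) (hB : B.PosDef) :
    Real.sqrt (∑ i : Fin n, (Real.log (sortedEigs A i) - Real.log (sortedEigs B i)) ^ 2)
      ≤ riemDist A B := by
  set M := pdInvSqrt A * B * pdInvSqrt A
  have hM : M.PosDef := posDef_pdInvSqrt_mul_mul_pdInvSqrt hA hB
  have hR : (pdSqrt A)ᴴ = pdSqrt A := isHermitian_matFun hA.1 _
  have hRA : (pdSqrt A)ᴴ * pdSqrt A = A := by rw [hR, pdSqrt_mul_pdSqrt hA.posSemidef]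
  have hRB : (pdSqrt A)ᴴ * M * pdSqrt A = B := by
    simp only [hR, M, ← Matrix.mul_assoc, pdSqrt_mul_pdInvSqrt hA, Matrix.one_mul]
    rw [Matrix.mul_assoc, pdInvSqrt_mul_pdSqrt hA, Matrix.mul_one]
  rw [riemDist, matLog, frob_matFun hM.1]
  apply Real.sqrt_le_sqrt
  calc ∑ i, (Real.log (sortedEigs A i) - Real.log (sortedEigs B i)) ^ 2
      = ∑ i, (Real.log (sortedEigs B i) - Real.log (sortedEigs A i)) ^ 2 :=
        sum_congr rfl fun i _ => by ring
    _ ≤ ∑ i, Real.log (sortedEigs M i) ^ 2 :=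
        sum_sq_le_sum_sq_of_sum_le_sum_Iic
          (fun k S hS => sum_log_sortedEigs_sub_le hA hB hM hRA hRB k S hS)
          (sum_log_sortedEigs_sub_eq hA hB hM hRA hRB)
end
end

section
/- Let A ∈ P_{2n} admit a Williamson decomposition A = Mᵀ [[D,0],[0,D]] M, where M is a real symplectic matrix (MᵀJM = J with J = [[0,I_n],[−I_n,0]]) and D = diag(d_1, …, d_n) with 0 < d_1 ≤ ⋯ ≤ d_n. Then the eigenvalues of the positive definite matrix A^{1/2} Jᵀ A J A^{1/2}, arranged in decreasing order, are (d_n², d_n², d_{n−1}², d_{n−1}², …, d_1², d_1²); equivalently, the extended symplectic eigenvalues of A satisfy δ̃(A) = λ^{1/2}(A^{1/2} Jᵀ A J A^{1/2}). -/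
open Matrix BigOperators

noncomputable section

/-!
With `S = A^{1/2}`, the matrices `S X S` and `X S² = X A` have the same characteristic
polynomial, so `A^{1/2} Jᵀ A J A^{1/2}` has that of `Jᵀ A J A`. For `A = Mᵀ N M` with
`N = diag(D, D)` commuting with `J`, symplecticity gives `M J Mᵀ = J` and `Jᵀ Mᵀ J = M⁻¹`, whence
`Jᵀ A J A = M⁻¹ N² M`. So the characteristic polynomial is `∏ (X - d_i²)²`, and the sorted
eigenvalues of a symmetric matrix are read off its characteristic polynomial.
-/

open Polynomial

namespace Matrix

variable {m R : Type*} [Fintype m] [DecidableEq m] [CommRing R]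

theorem mul_transpose_mul_transpose_mul_eq_one {J M : Matrix m m R} (hJ : Jᵀ * J = 1)
    (hM : Mᵀ * J * M = J) : M * Jᵀ * Mᵀ * J = 1 := by
  have h : Jᵀ * Mᵀ * J * M = 1 := by rw [mul_assoc _ J, mul_assoc, ← mul_assoc Mᵀ, hM, hJ]
  simpa only [mul_assoc] using mul_eq_one_comm.mp h

theorem mul_mul_transpose_eq_of_transpose_mul_mul_eq {J M : Matrix m m R} (hJ : Jᵀ * J = 1)
    (hM : Mᵀ * J * M = J) : M * J * Mᵀ = J := by
  have h : M * Jᵀ * Mᵀ = Jᵀ := by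
    calc M * Jᵀ * Mᵀ = M * Jᵀ * Mᵀ * (J * Jᵀ) := by rw [mul_eq_one_comm.mp hJ, mul_one]
      _ = Jᵀ := by rw [← mul_assoc, mul_transpose_mul_transpose_mul_eq_one hJ hM, one_mul]
  simpa [transpose_mul, mul_assoc] using congrArg transpose h

theorem charpoly_mul_mul_of_mul_self_eq {S A : Matrix m m R} (hS : S * S = A)
    (X : Matrix m m R) : (S * X * S).charpoly = (X * A).charpoly := by
  rw [mul_assoc, charpoly_mul_comm, mul_assoc, hS]

theorem charpoly_transpose_mul_mul_mul_of_symplectic_congr {J M N : Matrix m m R}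
    (hJ : Jᵀ * J = 1) (hM : Mᵀ * J * M = J) (hNJ : Commute N J) :
    (Jᵀ * (Mᵀ * N * M) * J * (Mᵀ * N * M)).charpoly = (N * N).charpoly := by
  have hMJ := mul_mul_transpose_eq_of_transpose_mul_mul_eq hJ hM
  have hMJM := mul_transpose_mul_transpose_mul_eq_one hJ hM
  calc (Jᵀ * (Mᵀ * N * M) * J * (Mᵀ * N * M)).charpoly
      = ((Jᵀ * Mᵀ * N * (M * J * Mᵀ) * N) * M).charpoly := by simp only [mul_assoc]
    _ = (M * Jᵀ * Mᵀ * N * J * N).charpoly := by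
        rw [charpoly_mul_comm, hMJ]; simp only [mul_assoc]
    _ = (N * N).charpoly := by
        rw [mul_assoc _ N J, hNJ.eq, ← mul_assoc, hMJM, one_mul]

end Matrix

theorem Monotone.eq_of_map_univ_val_eq {α : Type*} [LinearOrder α] {k : ℕ} {f g : Fin k → α}
    (hf : Monotone f) (hg : Monotone g)
    (h : Finset.univ.val.map f = Finset.univ.val.map g) : f = g := by
  rw [Fin.univ_val_map, Fin.univ_val_map, Multiset.coe_eq_coe] at h
  exact List.ofFn_injective <|
    h.eq_of_sortedLE (List.sortedLE_ofFn_iff.mpr hf) (List.sortedLE_ofFn_iff.mpr hg)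

theorem sortedEigs_eq_of_charpoly_eq_prod {k : ℕ} {H : Matrix (Fin k) (Fin k) ℝ}
    (hH : H.IsHermitian) {g : Fin k → ℝ} (hg : Monotone g)
    (hchar : H.charpoly = ∏ j, (X - C (g j))) (i : Fin k) :
    sortedEigs H i = g i.rev := by
  have hroots : Finset.univ.val.map hH.eigenvalues = Finset.univ.val.map g := by
    have h := hH.roots_charpoly_eq_eigenvalues
    rw [hchar, roots_prod _ _ (Finset.prod_ne_zero_iff.mpr fun j _ => X_sub_C_ne_zero _)] at h
    simpa using h.symm
  have hsorted : hH.eigenvalues ∘ Tuple.sort hH.eigenvalues = g := by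
    refine (Tuple.monotone_sort _).eq_of_map_univ_val_eq hg ?_
    rw [← Multiset.map_map, Multiset.map_univ_val_equiv, hroots]
  simp only [sortedEigs, dif_pos hH, ← hsorted, Function.comp_apply]

theorem Fin.prod_univ_add_self_div_two {M : Type*} [CommMonoid M] {k : ℕ} (f : Fin k → M) :
    ∏ j : Fin (k + k), f ⟨j / 2, by omega⟩ = (∏ i, f i) ^ 2 := by
  rw [← Fintype.prod_equiv (finProdFinEquiv.trans (finCongr (Nat.mul_two k)))
    (fun p : Fin k × Fin 2 => f p.1) _ fun p => ?_]
  · simp [Fintype.prod_prod_type, pow_two, Finset.prod_mul_distrib]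
  · congr 1
    ext
    simp only [Equiv.trans_apply, finCongr_apply, Fin.val_cast, finProdFinEquiv_apply_val]
    omega

theorem pdSqrt_eq_cfc {k : ℕ} {A : Matrix (Fin k) (Fin k) ℝ} (hA : A.IsHermitian) :
    pdSqrt A = cfc Real.sqrt A := by
  rw [pdSqrt, matFun, dif_pos hA, hA.cfc_eq]

theorem isHermitian_pdSqrt {k : ℕ} {A : Matrix (Fin k) (Fin k) ℝ} (hA : A.IsHermitian) :
    (pdSqrt A).IsHermitian := by
  rw [pdSqrt_eq_cfc hA]
  exact cfc_predicate Real.sqrt A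

theorem pdSqrt_mul_self {k : ℕ} {A : Matrix (Fin k) (Fin k) ℝ} (hA : A.PosSemidef) :
    pdSqrt A * pdSqrt A = A := by
  rw [pdSqrt_eq_cfc hA.isHermitian, ← cfc_mul Real.sqrt Real.sqrt A]
  conv_rhs => rw [← cfc_id' ℝ A (ha := hA.isHermitian)]
  refine cfc_congr fun x hx => ?_
  obtain ⟨i, rfl⟩ := hA.isHermitian.spectrum_real_eq_range_eigenvalues ▸ hx
  exact Real.mul_self_sqrt (hA.eigenvalues_nonneg i)

theorem isHermitian_sympProd {n : ℕ} {A : Matrix (Fin (n + n)) (Fin (n + n)) ℝ}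
    (hA : A.IsHermitian) : (sympProd A).IsHermitian := by
  have hS := isHermitian_pdSqrt hA
  rw [IsHermitian, conjTranspose_eq_transpose_of_trivial] at hS hA ⊢
  simp only [sympProd, transpose_mul, transpose_transpose, hS, hA, mul_assoc]

theorem Jmat_transpose_mul_self (n : ℕ) : (Jmat n)ᵀ * Jmat n = 1 := by
  rw [Jmat, transpose_reindex, fromBlocks_transpose, reindex_apply, reindex_apply,
    submatrix_mul_equiv, fromBlocks_multiply, ← submatrix_one_equiv finSumFinEquiv.symm]
  simp [← fromBlocks_one]

theorem commute_reindex_fromBlocks_Jmat {n : ℕ} (D : Matrix (Fin n) (Fin n) ℝ) :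
    Commute (reindex finSumFinEquiv finSumFinEquiv (fromBlocks D 0 0 D)) (Jmat n) := by
  rw [Commute, SemiconjBy, Jmat, reindex_apply, reindex_apply, submatrix_mul_equiv,
    submatrix_mul_equiv, fromBlocks_multiply, fromBlocks_multiply]
  simp

theorem charpoly_reindex_fromBlocks_diagonal_sq {R : Type*} [CommRing R] {n : ℕ}
    (d : Fin n → R) :
    (reindex finSumFinEquiv finSumFinEquiv (fromBlocks (diagonal d) 0 0 (diagonal d)) *
      reindex finSumFinEquiv finSumFinEquiv (fromBlocks (diagonal d) 0 0 (diagonal d))).charpoly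
      = ∏ j : Fin (n + n), (X - C (d ⟨j / 2, by omega⟩ ^ 2)) := by
  rw [reindex_apply, submatrix_mul_equiv, fromBlocks_multiply, ← reindex_apply,
    charpoly_reindex, Fin.prod_univ_add_self_div_two fun i => X - C (d i ^ 2)]
  simp [charpoly_diagonal, pow_two]

/-- if `A = Mᵀ [[D,0],[0,D]] M` is a Williamson decomposition
(`M` symplectic, `D = diag d` with `0 < d_1 ≤ … ≤ d_n`), then the decreasingly ordered
eigenvalues of `A^{1/2} Jᵀ A J A^{1/2}` are `(d_n², d_n², …, d_1², d_1²)`; equivalently the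
extended symplectic eigenvalues of `A` are `λ^{1/2}(A^{1/2} Jᵀ A J A^{1/2})`. -/
theorem williamson_extended_symplectic_eigenvalues
    (n : ℕ) (A M : Matrix (Fin (n + n)) (Fin (n + n)) ℝ)
    (d : Fin n → ℝ) (hd : ∀ i, 0 < d i) (hdmono : Monotone d)
    (hM : Mᵀ * Jmat n * M = Jmat n)
    (hdecomp : A = Mᵀ *
      (Matrix.reindex finSumFinEquiv finSumFinEquiv
        (Matrix.fromBlocks (Matrix.diagonal d) 0 0 (Matrix.diagonal d))) * M)
    (hA : A.PosDef) :
    ∀ i : Fin (n + n),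
      sortedEigs (sympProd A) i = d ⟨n - 1 - i.val / 2, by have := i.isLt; omega⟩ ^ 2 ∧
      Real.sqrt (sortedEigs (sympProd A) i) =
        d ⟨n - 1 - i.val / 2, by have := i.isLt; omega⟩ := by
  have hchar : (sympProd A).charpoly = ∏ j : Fin (n + n), (X - C (d ⟨j / 2, by omega⟩ ^ 2)) := by
    rw [show sympProd A = pdSqrt A * ((Jmat n)ᵀ * A * Jmat n) * pdSqrt A by
        simp only [sympProd, mul_assoc],
      charpoly_mul_mul_of_mul_self_eq (pdSqrt_mul_self hA.posSemidef), hdecomp,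
      charpoly_transpose_mul_mul_mul_of_symplectic_congr (Jmat_transpose_mul_self n) hM
        (commute_reindex_fromBlocks_Jmat _),
      charpoly_reindex_fromBlocks_diagonal_sq]
  have hmono : Monotone fun j : Fin (n + n) => d ⟨j / 2, by omega⟩ ^ 2 := fun j k hjk =>
    pow_le_pow_left₀ (hd _).le (hdmono (Nat.div_le_div_right (c := 2) hjk)) 2
  intro i
  have hi : sortedEigs (sympProd A) i = d ⟨n - 1 - i.val / 2, by omega⟩ ^ 2 := by
    rw [sortedEigs_eq_of_charpoly_eq_prod (isHermitian_sympProd hA.isHermitian) hmono hchar]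
    congr 3
    simp only [Fin.val_rev]
    omega
  exact ⟨hi, by rw [hi, Real.sqrt_sq (hd _).le]⟩
end
end

section
/- (Integral Ky Fan majorization) Let (Ω, P) be a probability space and φ : Ω → S_n a Bochner-integrable map into the n×n real symmetric matrices. Then λ(∫_Ω φ dP) ≺ ∫_Ω λ(φ(ω)) dP(ω): for every k = 1, …, n, ∑_{i=1}^k λ_i(∫_Ω φ dP) ≤ ∫_Ω ∑_{i=1}^k λ_i(φ(ω)) dP(ω), with equality for k = n. -/
/-!
Ky Fan's maximum principle: for symmetric `X`, the sum of its `k` largest eigenvalues is the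
maximum of `tr (Q X)` over `0 ≤ Q ≤ 1` with `tr Q = k`, attained at the projection onto the top
`k` eigenvectors. Taking `Q` optimal for `∫ φ`, linearity gives
`tr (Q ∫ φ) = ∫ tr (Q φ) ≤ ∫ (sum of the k largest eigenvalues of φ)`; for `k = n` both sides
are traces. The same principle makes the eigenvalue partial sums Lipschitz on symmetric matrices
(the entries of such `Q` lie in `[-1, 1]`), which yields the integrability of the right-hand side.
-/

open Matrix BigOperators

noncomputable section

open MeasureTheory

attribute [local instance] Matrix.normedAddCommGroup Matrix.normedSpace


namespace Matrix

variable {ι : Type*} [Fintype ι]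

lemma PosSemidef.two_mul_abs_apply_le {A : Matrix ι ι ℝ} (hA : A.PosSemidef) (i j : ι) :
    2 * |A i j| ≤ A i i + A j j := by
  classical
  have hsymm : A j i = A i j := by simpa using hA.isHermitian.apply i j
  have quad (s : ℝ) : 0 ≤ A i i + s * A i j + s * A j i + s * s * A j j := by
    have := hA.dotProduct_mulVec_nonneg (Pi.single i 1 + s • Pi.single j 1)
    simp only [mulVec_add, mulVec_smul, mulVec_single_one, dotProduct_add, add_dotProduct,
      smul_dotProduct, dotProduct_smul, star_trivial, single_dotProduct,
      col_apply, one_mul, smul_eq_mul] at this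
    linarith
  have h₁ := quad 1
  have h₂ := quad (-1)
  rcases abs_cases (A i j) with ⟨h, -⟩ | ⟨h, -⟩ <;> rw [h] <;> linarith

lemma abs_apply_le_one_of_posSemidef [DecidableEq ι] {Q : Matrix ι ι ℝ} (hQ : Q.PosSemidef)
    (hQ₁ : (1 - Q).PosSemidef) (i j : ι) : |Q i j| ≤ 1 := by
  have hdiag (p : ι) : Q p p ≤ 1 := by
    simpa [sub_apply] using hQ₁.diag_nonneg (i := p)
  linarith [hQ.two_mul_abs_apply_le i j, hdiag i, hdiag j]

lemma abs_trace_mul_le {Q Z : Matrix ι ι ℝ} (hQ : ∀ i j, |Q i j| ≤ 1) :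
    |(Q * Z).trace| ≤ Fintype.card ι ^ 2 * ‖Z‖ := by
  calc |(Q * Z).trace| = |∑ i, ∑ j, Q i j * Z j i| := by simp [trace, mul_apply]
    _ ≤ ∑ i, ∑ j, |Q i j * Z j i| :=
        (Finset.abs_sum_le_sum_abs _ _).trans
          (Finset.sum_le_sum fun i _ => Finset.abs_sum_le_sum_abs _ _)
    _ ≤ ∑ _i : ι, ∑ _j : ι, ‖Z‖ := by
        gcongr with i _ j _
        rw [abs_mul]
        exact (mul_le_of_le_one_left (abs_nonneg _) (hQ i j)).trans
          (norm_entry_le_entrywise_sup_norm Z)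
    _ = Fintype.card ι ^ 2 * ‖Z‖ := by simp [sq, mul_assoc]

lemma trace_mul_conj_diagonal [DecidableEq ι] (Q V : Matrix ι ι ℝ) (d : ι → ℝ) :
    (Q * (V * diagonal d * star V)).trace = ∑ i, (star V * Q * V) i i * d i := by
  rw [← mul_assoc, ← mul_assoc, trace_mul_cycle, ← mul_assoc]
  simp [trace, mul_diagonal]

end Matrix

section KyFan

open Finset

variable {n : ℕ}

lemma sum_mul_le_sum_filter_lt_of_antitone {k : ℕ} (hk : k ≤ n) {μ d : Fin n → ℝ}
    (hμ : Antitone μ) (hd₀ : ∀ i, 0 ≤ d i) (hd₁ : ∀ i, d i ≤ 1) (hd : ∑ i, d i = k) :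
    ∑ i, d i * μ i ≤ ∑ i ∈ univ.filter (fun i : Fin n => i.val < k), μ i := by
  rcases n.eq_zero_or_pos with rfl | hn
  · simp
  set c : Fin n → ℝ := fun i => if i.val < k then 1 else 0
  have hc : ∑ i, c i = k := by
    simp [c, Fin.card_filter_val_lt, hk]
  set t := μ ⟨k - 1, by omega⟩
  have hterm (i : Fin n) : 0 ≤ (c i - d i) * (μ i - t) := by
    by_cases hi : i.val < k
    · refine mul_nonneg (by simp [c, hi, hd₁]) (sub_nonneg.2 (hμ ?_))
      change i.val ≤ k - 1; omega
    · refine mul_nonneg_of_nonpos_of_nonpos (by simp [c, hi, hd₀]) (sub_nonpos.2 (hμ ?_))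
      change k - 1 ≤ i.val; omega
  have hsplit : ∑ i, (c i - d i) * (μ i - t) = ∑ i, c i * μ i - ∑ i, d i * μ i := by
    simp only [sub_mul, mul_sub, sum_sub_distrib, ← sum_mul, hc, hd]
    ring
  have hfilter : ∑ i ∈ univ.filter (fun i : Fin n => i.val < k), μ i = ∑ i, c i * μ i := by
    simp [c, sum_filter, ite_mul]
  linarith [sum_nonneg fun i (_ : i ∈ univ) => hterm i]

lemma sortedEigs_eq_eigenvalues {X : Matrix (Fin n) (Fin n) ℝ} (hX : X.IsHermitian) (i : Fin n) :
    sortedEigs X i = hX.eigenvalues (Tuple.sort hX.eigenvalues i.rev) := by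
  rw [sortedEigs, dif_pos hX]

lemma sortedEigs_antitone_s15 {X : Matrix (Fin n) (Fin n) ℝ} (hX : X.IsHermitian) :
    Antitone (sortedEigs X) := fun i j hij => by
  simp only [sortedEigs_eq_eigenvalues hX]
  exact Tuple.monotone_sort hX.eigenvalues (Fin.rev_le_rev.2 hij)

lemma Matrix.IsHermitian.exists_unitary_eq_conj_diagonal_sortedEigs
    {X : Matrix (Fin n) (Fin n) ℝ} (hX : X.IsHermitian) :
    ∃ V ∈ unitaryGroup (Fin n) ℝ, X = V * diagonal (sortedEigs X) * star V := by
  set e : Equiv.Perm (Fin n) := Fin.revPerm.trans (Tuple.sort hX.eigenvalues)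
  set U : Matrix (Fin n) (Fin n) ℝ := (hX.eigenvectorUnitary : Matrix (Fin n) (Fin n) ℝ)
  have hd : sortedEigs X = hX.eigenvalues ∘ e := funext (sortedEigs_eq_eigenvalues hX)
  have hstar : star (U.submatrix id e) = (star U).submatrix e id := by
    simp only [star_eq_conjTranspose, conjTranspose_submatrix]
  refine ⟨U.submatrix id e, ?_, ?_⟩
  · rw [mem_unitaryGroup_iff, hstar, submatrix_mul_equiv]
    simp [U]
  · rw [hstar, hd, ← submatrix_diagonal_equiv, submatrix_mul_equiv,
      submatrix_mul_equiv]
    conv_lhs => rw [hX.spectral_theorem]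
    simp [U]

def kyFanSum (k : ℕ) (X : Matrix (Fin n) (Fin n) ℝ) : ℝ :=
  ∑ i ∈ univ.filter (fun i : Fin n => i.val < k), sortedEigs X i

theorem trace_mul_le_kyFanSum {k : ℕ} (hk : k ≤ n) {Q X : Matrix (Fin n) (Fin n) ℝ}
    (hQ : Q.PosSemidef) (hQ₁ : (1 - Q).PosSemidef) (htr : Q.trace = k) (hX : X.IsHermitian) :
    (Q * X).trace ≤ kyFanSum k X := by
  obtain ⟨V, hV, hXV⟩ := hX.exists_unitary_eq_conj_diagonal_sortedEigs
  have hVV : star V * V = 1 := mem_unitaryGroup_iff'.1 hV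
  set W := star V * Q * V
  have hW : W.PosSemidef := hQ.conjTranspose_mul_mul_same V
  have hW₁ : (1 - W).PosSemidef := by
    have := hQ₁.conjTranspose_mul_mul_same V
    rwa [← star_eq_conjTranspose, mul_sub, sub_mul, mul_one, hVV] at this
  have hWtr : W.trace = k := by
    rw [trace_mul_cycle, mem_unitaryGroup_iff.1 hV, one_mul, htr]
  have hdiag := trace_mul_conj_diagonal Q V (sortedEigs X)
  rw [← hXV] at hdiag
  rw [hdiag]
  refine sum_mul_le_sum_filter_lt_of_antitone hk (sortedEigs_antitone_s15 hX)
    (fun i => hW.diag_nonneg) (fun i => ?_) hWtr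
  simpa using hW₁.diag_nonneg (i := i)

theorem exists_trace_mul_eq_kyFanSum {k : ℕ} (hk : k ≤ n) {X : Matrix (Fin n) (Fin n) ℝ}
    (hX : X.IsHermitian) :
    ∃ Q : Matrix (Fin n) (Fin n) ℝ, Q.PosSemidef ∧ (1 - Q).PosSemidef ∧ Q.trace = k ∧
      (Q * X).trace = kyFanSum k X := by
  obtain ⟨V, hV, hXV⟩ := hX.exists_unitary_eq_conj_diagonal_sortedEigs
  have hVV : star V * V = 1 := mem_unitaryGroup_iff'.1 hV
  have hVV' : V * star V = 1 := mem_unitaryGroup_iff.1 hV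
  set c : Fin n → ℝ := fun i => if i.val < k then 1 else 0
  have hc : ∀ i, 0 ≤ c i ∧ c i ≤ 1 := fun i => by by_cases hi : i.val < k <;> simp [c, hi]
  have hconj (d : Fin n → ℝ) : (diagonal d).PosSemidef → (V * diagonal d * star V).PosSemidef :=
    fun h => by simpa [star_eq_conjTranspose] using h.mul_mul_conjTranspose_same V
  -- the orthogonal projection onto the span of the top `k` eigenvectors
  refine ⟨V * diagonal c * star V, hconj c (posSemidef_diagonal_iff.2 fun i => (hc i).1),
    ?_, ?_, ?_⟩
  · have h1 : 1 - V * diagonal c * star V = V * diagonal (1 - c) * star V := by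
      have : diagonal (1 - c) = 1 - diagonal c := by
        rw [← diagonal_one, diagonal_sub]; rfl
      rw [this, mul_sub, sub_mul, mul_one, hVV']
    rw [h1]
    exact hconj _ (posSemidef_diagonal_iff.2 fun i => sub_nonneg.2 (hc i).2)
  · rw [trace_mul_cycle, hVV, one_mul, trace_diagonal]
    simp [c, Fin.card_filter_val_lt, hk]
  · have hdiag := trace_mul_conj_diagonal (V * diagonal c * star V) V (sortedEigs X)
    rw [← hXV] at hdiag
    have hW : star V * (V * diagonal c * star V) * V = diagonal c := by
      simp only [← mul_assoc, hVV, one_mul]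
      rw [mul_assoc, hVV, mul_one]
    rw [hdiag, hW, kyFanSum, sum_filter]
    simp [c, ite_mul]

lemma sum_sortedEigs_eq_trace {X : Matrix (Fin n) (Fin n) ℝ} (hX : X.IsHermitian) :
    ∑ i, sortedEigs X i = X.trace := by
  obtain ⟨V, hV, hXV⟩ := hX.exists_unitary_eq_conj_diagonal_sortedEigs
  have h := trace_mul_conj_diagonal 1 V (sortedEigs X)
  rw [← hXV, one_mul, mul_one, mem_unitaryGroup_iff'.1 hV] at h
  simpa using h.symm

lemma abs_kyFanSum_le {k : ℕ} (hk : k ≤ n) {X : Matrix (Fin n) (Fin n) ℝ}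
    (hX : X.IsHermitian) : |kyFanSum k X| ≤ n ^ 2 * ‖X‖ := by
  obtain ⟨Q, hQ, hQ₁, -, hQX⟩ := exists_trace_mul_eq_kyFanSum hk hX
  simpa [hQX] using abs_trace_mul_le (Z := X) (abs_apply_le_one_of_posSemidef hQ hQ₁)

lemma kyFanSum_sub_le {k : ℕ} (hk : k ≤ n) {A B : Matrix (Fin n) (Fin n) ℝ}
    (hA : A.IsHermitian) (hB : B.IsHermitian) :
    kyFanSum k A - kyFanSum k B ≤ n ^ 2 * ‖A - B‖ := by
  obtain ⟨Q, hQ, hQ₁, htr, hQA⟩ := exists_trace_mul_eq_kyFanSum hk hA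
  have hQB := trace_mul_le_kyFanSum hk hQ hQ₁ htr hB
  have hQAB :=
    (abs_le.1 (abs_trace_mul_le (Z := A - B) (abs_apply_le_one_of_posSemidef hQ hQ₁))).2
  rw [mul_sub, trace_sub, Fintype.card_fin] at hQAB
  linarith

lemma lipschitzOnWith_kyFanSum {k : ℕ} (hk : k ≤ n) :
    LipschitzOnWith ((n : NNReal) ^ 2) (kyFanSum k)
      {X : Matrix (Fin n) (Fin n) ℝ | X.IsHermitian} :=
  LipschitzOnWith.of_dist_le_mul fun A hA B hB => by
    rw [Real.dist_eq, dist_eq_norm, abs_sub_le_iff]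
    push_cast
    exact ⟨kyFanSum_sub_le hk hA hB, norm_sub_rev A B ▸ kyFanSum_sub_le hk hB hA⟩

-- Instance search does not find `ContinuousENorm` for matrices under the local entrywise norm,
-- so it is given explicitly.
lemma MeasureTheory.Integrable.kyFanSum_comp {Ω : Type*} [MeasurableSpace Ω] {μ : Measure Ω}
    {φ : Ω → Matrix (Fin n) (Fin n) ℝ}
    (hφ : @Integrable _ _ SeminormedAddGroup.toContinuousENorm _ _ φ μ)
    (hsym : ∀ ω, (φ ω).IsHermitian)
    {k : ℕ} (hk : k ≤ n) : Integrable (fun ω => kyFanSum k (φ ω)) μ := by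
  -- a Lipschitz extension of `kyFanSum k` to all matrices makes it continuous along `φ`
  obtain ⟨g, hg, hgf⟩ := (lipschitzOnWith_kyFanSum hk).extend_real
  have hmeas : AEStronglyMeasurable (fun ω => kyFanSum k (φ ω)) μ := by
    simpa [Function.comp_def, ← hgf (hsym _)] using hg.continuous.comp_aestronglyMeasurable hφ.1
  refine (hφ.norm.const_mul (n ^ 2)).mono' hmeas (ae_of_all _ fun ω => ?_)
  exact abs_kyFanSum_le hk (hsym ω)

end KyFan

namespace Matrix

variable {ι Ω : Type*} [Fintype ι] [MeasurableSpace Ω] {μ : Measure Ω}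

lemma isHermitian_integral {φ : Ω → Matrix ι ι ℝ} (hφ : ∀ᵐ ω ∂μ, (φ ω).IsHermitian) :
    (∫ ω, φ ω ∂μ).IsHermitian := by
  let T : Matrix ι ι ℝ ≃L[ℝ] Matrix ι ι ℝ :=
    (transposeLinearEquiv ι ι ℝ ℝ).toContinuousLinearEquiv
  rw [IsHermitian, conjTranspose_eq_transpose_of_trivial]
  calc (∫ ω, φ ω ∂μ)ᵀ = T (∫ ω, φ ω ∂μ) := rfl
    _ = ∫ ω, T (φ ω) ∂μ := (T.integral_comp_comm φ).symm
    _ = ∫ ω, φ ω ∂μ := integral_congr_ae <| hφ.mono fun ω hω =>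
        (conjTranspose_eq_transpose_of_trivial (φ ω)).symm.trans hω

lemma integral_trace_mul (Q : Matrix ι ι ℝ) {φ : Ω → Matrix ι ι ℝ}
    (hφ : @Integrable _ _ SeminormedAddGroup.toContinuousENorm _ _ φ μ) :
    ∫ ω, (Q * φ ω).trace ∂μ = (Q * ∫ ω, φ ω ∂μ).trace :=
  (LinearMap.toContinuousLinearMap
    (traceLinearMap ι ℝ ℝ ∘ₗ LinearMap.mulLeft ℝ Q)).integral_comp_comm hφ

lemma integrable_trace_mul (Q : Matrix ι ι ℝ) {φ : Ω → Matrix ι ι ℝ}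
    (hφ : @Integrable _ _ SeminormedAddGroup.toContinuousENorm _ _ φ μ) :
    Integrable (fun ω => (Q * φ ω).trace) μ :=
  (LinearMap.toContinuousLinearMap
    (traceLinearMap ι ℝ ℝ ∘ₗ LinearMap.mulLeft ℝ Q)).integrable_comp hφ

end Matrix

theorem integral_ky_fan_majorization_general
    (n : ℕ) {Ω : Type*} [MeasurableSpace Ω] (P : Measure Ω)
    (φ : Ω → Matrix (Fin n) (Fin n) ℝ)
    (hsym : ∀ ω, (φ ω).IsHermitian)
    (hint : @Integrable _ _ SeminormedAddGroup.toContinuousENorm _ _ φ P) :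
    (∀ k : ℕ, k ≤ n →
      ∑ i ∈ Finset.univ.filter (fun i : Fin n => i.val < k), sortedEigs (∫ ω, φ ω ∂P) i
        ≤ ∫ ω, (∑ i ∈ Finset.univ.filter (fun i : Fin n => i.val < k),
            sortedEigs (φ ω) i) ∂P) ∧
    (∑ i : Fin n, sortedEigs (∫ ω, φ ω ∂P) i = ∫ ω, (∑ i : Fin n, sortedEigs (φ ω) i) ∂P) := by
  have hM : (∫ ω, φ ω ∂P).IsHermitian := isHermitian_integral (ae_of_all _ hsym)
  refine ⟨fun k hk => ?_, ?_⟩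
  · obtain ⟨Q, hQ, hQ₁, htr, hQM⟩ := exists_trace_mul_eq_kyFanSum hk hM
    calc kyFanSum k (∫ ω, φ ω ∂P) = ∫ ω, (Q * φ ω).trace ∂P := by
          rw [integral_trace_mul Q hint, hQM]
      _ ≤ ∫ ω, kyFanSum k (φ ω) ∂P :=
        integral_mono (integrable_trace_mul Q hint) (hint.kyFanSum_comp hsym hk)
          fun ω => trace_mul_le_kyFanSum hk hQ hQ₁ htr (hsym ω)
  · simp only [sum_sortedEigs_eq_trace hM, sum_sortedEigs_eq_trace (hsym _)]
    simpa using (integral_trace_mul 1 hint).symm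

/-- integral Ky Fan majorization: for a Bochner-integrable map
`φ : Ω → S_n` on a probability space, `λ(∫ φ dP) ≺ ∫ λ(φ(ω)) dP(ω)`:
all partial sums of the decreasingly ordered eigenvalues satisfy
`∑_{i<k} λ_i(∫ φ dP) ≤ ∫ ∑_{i<k} λ_i(φ(ω)) dP(ω)`, with equality for `k = n`. -/
theorem integral_ky_fan_majorization
    (n : ℕ) {Ω : Type*} [MeasurableSpace Ω] (P : Measure Ω) [IsProbabilityMeasure P]
    (φ : Ω → Matrix (Fin n) (Fin n) ℝ)
    (hsym : ∀ ω, (φ ω).IsHermitian)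
    (hint : @Integrable _ _ SeminormedAddGroup.toContinuousENorm _ _ φ P) :
    (∀ k : ℕ, k ≤ n →
      ∑ i ∈ Finset.univ.filter (fun i : Fin n => i.val < k), sortedEigs (∫ ω, φ ω ∂P) i
        ≤ ∫ ω, (∑ i ∈ Finset.univ.filter (fun i : Fin n => i.val < k),
            sortedEigs (φ ω) i) ∂P) ∧
    (∑ i : Fin n, sortedEigs (∫ ω, φ ω ∂P) i = ∫ ω, (∑ i : Fin n, sortedEigs (φ ω) i) ∂P) :=
  integral_ky_fan_majorization_general n P φ hsym hint
end
end
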